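/- Let H be a graded real Poincaré duality algebra of top degree d, and let U ⊂ H^1 be a connected subset such that (H, ℓ) satisfies the Hard Lefschetz property for every ℓ ∈ U. Then for each 0 ≤ i ≤ d/2, the signature of the quadratic form Q_ℓ(x) = deg(x² ℓ^{d-2i}) on H^i is the same for all ℓ ∈ U. In particular, if (H, ℓ₀) satisfies the Hodge–Riemann relations for some ℓ₀ ∈ U, then (H, ℓ) satisfies the Hodge–Riemann relations for all ℓ ∈ U. -/

import Mathlib

section PDAlg

variable (A : Type) [CommRing A] [Algebra ℝ A]

/-- `IsPDAlgebra A g d dg` says that the grading `g` makes `A` a finite-dimensional graded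
commutative `ℝ`-algebra with top degree `d`, and `dg` identifies the top graded piece with `ℝ`
so that the multiplication pairing `g i × g (d-i) → ℝ` is non-degenerate (Poincaré duality). -/
def IsPDAlgebra (g : ℕ → Submodule ℝ A) (d : ℕ) (dg : A →ₗ[ℝ] ℝ) : Prop :=
  DirectSum.IsInternal g ∧
  (∀ i j, g i * g j ≤ g (i + j)) ∧
  (1 : A) ∈ g 0 ∧
  (∀ k, d < k → g k = ⊥) ∧
  FiniteDimensional ℝ A ∧
  (∀ k, k ≠ d → ∀ x ∈ g k, dg x = 0) ∧
  Function.Bijective (fun x : g d => dg x) ∧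
  (∀ i, i ≤ d → ∀ x ∈ g i, (∀ y ∈ g (d - i), dg (x * y) = 0) → x = 0)

/-- Multiplication by `ℓ ^ (d - 2i)` is an isomorphism `H^i → H^(d-i)`. -/
def HardLefschetzAt (g : ℕ → Submodule ℝ A) (d i : ℕ) (ℓ : A) : Prop :=
  (∀ x ∈ g i, ℓ ^ (d - 2 * i) * x = 0 → x = 0) ∧
  ∀ y ∈ g (d - i), ∃ x ∈ g i, ℓ ^ (d - 2 * i) * x = y

def HardLefschetz (g : ℕ → Submodule ℝ A) (d : ℕ) (ℓ : A) : Prop :=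
  ∀ i, 2 * i ≤ d → HardLefschetzAt A g d i ℓ

/-- The primitive part `P^i = ker (ℓ^(d-2i+1) : H^i → H^(d-i+1))`. -/
noncomputable def Primitive (g : ℕ → Submodule ℝ A) (d i : ℕ) (ℓ : A) : Submodule ℝ A :=
  g i ⊓ LinearMap.ker (LinearMap.mulLeft ℝ (ℓ ^ (d - 2 * i + 1)))

/-- `(-1)^i Q_ℓ` is positive definite on the primitive part `P^i`. -/
def HodgeRiemannAt (g : ℕ → Submodule ℝ A) (d : ℕ) (dg : A →ₗ[ℝ] ℝ) (i : ℕ) (ℓ : A) : Prop :=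
  ∀ x ∈ Primitive A g d i ℓ, x ≠ 0 → 0 < (-1 : ℝ) ^ i * dg (x * x * ℓ ^ (d - 2 * i))

def HodgeRiemann (g : ℕ → Submodule ℝ A) (d : ℕ) (dg : A →ₗ[ℝ] ℝ) (ℓ : A) : Prop :=
  ∀ i, 2 * i ≤ d → HodgeRiemannAt A g d dg i ℓ

/-- The maximal dimension of a subspace of `W` on which the quadratic form `q` is positive
definite. -/
noncomputable def posIndexOn (W : Submodule ℝ A) (q : A → ℝ) : ℕ :=
  sSup {n : ℕ | ∃ U : Submodule ℝ A, U ≤ W ∧ Module.finrank ℝ U = n ∧ ∀ x ∈ U, x ≠ 0 → 0 < q x}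

/-- The signature of the quadratic form `q` on the subspace `W`. -/
noncomputable def signatureOn (W : Submodule ℝ A) (q : A → ℝ) : ℤ :=
  (posIndexOn A W q : ℤ) - (posIndexOn A W (fun x => - q x) : ℤ)

end PDAlg


open Module

section Aux

variable {A : Type} [CommRing A] [Algebra ℝ A]

lemma pidx_nonempty (W : Submodule ℝ A) (q : A → ℝ) :
    {n : ℕ | ∃ U : Submodule ℝ A, U ≤ W ∧ Module.finrank ℝ U = n ∧
      ∀ x ∈ U, x ≠ 0 → 0 < q x}.Nonempty :=
  ⟨0, ⊥, bot_le, finrank_bot ℝ A, fun x hx hx0 => absurd (Submodule.mem_bot ℝ |>.mp hx) hx0⟩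

variable [FiniteDimensional ℝ A]

lemma pidx_bddAbove (W : Submodule ℝ A) (q : A → ℝ) :
    BddAbove {n : ℕ | ∃ U : Submodule ℝ A, U ≤ W ∧ Module.finrank ℝ U = n ∧
      ∀ x ∈ U, x ≠ 0 → 0 < q x} := by
  refine ⟨finrank ℝ A, fun n hn => ?_⟩
  obtain ⟨V, -, rfl, -⟩ := hn
  exact V.finrank_le

lemma posIndexOn_spec (W : Submodule ℝ A) (q : A → ℝ) :
    ∃ U : Submodule ℝ A, U ≤ W ∧ Module.finrank ℝ U = posIndexOn A W q ∧
      ∀ x ∈ U, x ≠ 0 → 0 < q x :=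
  Nat.sSup_mem (pidx_nonempty W q) (pidx_bddAbove W q)

lemma le_posIndexOn {W : Submodule ℝ A} {q : A → ℝ} {V : Submodule ℝ A}
    (hV : V ≤ W) (hq : ∀ x ∈ V, x ≠ 0 → 0 < q x) : finrank ℝ V ≤ posIndexOn A W q :=
  le_csSup (pidx_bddAbove W q) ⟨V, hV, rfl, hq⟩

/-- computation of `posIndexOn` from a positive/negative splitting -/
lemma posIndexOn_eq {W P N : Submodule ℝ A} {q : A → ℝ}
    (hP : P ≤ W) (hN : N ≤ W)
    (hsum : finrank ℝ P + finrank ℝ N = finrank ℝ W)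
    (hpos : ∀ x ∈ P, x ≠ 0 → 0 < q x) (hneg : ∀ x ∈ N, x ≠ 0 → q x < 0) :
    posIndexOn A W q = finrank ℝ P := by
  refine le_antisymm (csSup_le (pidx_nonempty W q) ?_) (le_posIndexOn hP hpos)
  rintro n ⟨V, hVW, rfl, hVq⟩
  have hdisj : V ⊓ N = ⊥ := by
    rw [eq_bot_iff]
    intro x hx
    rcases eq_or_ne x 0 with rfl | hx0
    · exact Submodule.zero_mem _
    · exact absurd (hVq x hx.1 hx0) (not_lt.mpr (le_of_lt (hneg x hx.2 hx0)))
  have h1 : finrank ℝ ↥(V ⊔ N) + finrank ℝ ↥(V ⊓ N) = finrank ℝ V + finrank ℝ N :=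
    Submodule.finrank_sup_add_finrank_inf_eq V N
  rw [hdisj] at h1
  simp only [finrank_bot, add_zero] at h1
  have h2 : finrank ℝ ↥(V ⊔ N) ≤ finrank ℝ W :=
    Submodule.finrank_mono (sup_le hVW hN)
  omega

end Aux


set_option maxHeartbeats 1600000 in
/-- Diagonalization: a symmetric bilinear form nondegenerate on `W` splits `W` into a
positive-definite and a negative-definite part. -/
lemma exists_posneg_split {A : Type} [CommRing A] [Algebra ℝ A] [FiniteDimensional ℝ A]
    (W : Submodule ℝ A) (b : A →ₗ[ℝ] A →ₗ[ℝ] ℝ)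
    (hsymm : ∀ x y, b x y = b y x)
    (hnd : ∀ x ∈ W, (∀ y ∈ W, b x y = 0) → x = 0) :
    ∃ P N : Submodule ℝ A, P ≤ W ∧ N ≤ W ∧
      finrank ℝ P + finrank ℝ N = finrank ℝ W ∧
      (∀ x ∈ P, x ≠ 0 → 0 < b x x) ∧ (∀ x ∈ N, x ≠ 0 → b x x < 0) := by
  classical
  have hbsymm : b.IsSymm := ⟨fun x y => hsymm x y⟩
  set b' : (↥W) →ₗ[ℝ] (↥W) →ₗ[ℝ] ℝ := b.domRestrict₁₂ W W with hb'
  have hb'app : ∀ x y : W, b' x y = b (x : A) (y : A) := fun x y => rfl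
  have hb'symm : b'.IsSymm := hbsymm.domRestrict W
  obtain ⟨v, hv⟩ := LinearMap.BilinForm.exists_orthogonal_basis hb'symm
  -- expansion of the quadratic form in the orthogonal basis
  have expand : ∀ x : W, b' x x = ∑ j, (v.repr x j) * (v.repr x j) * b' (v j) (v j) := by
    intro x
    conv_lhs => rw [← v.sum_repr x, map_sum]
    refine Finset.sum_congr rfl fun j _ => ?_
    rw [map_smul, map_sum, LinearMap.sum_apply]
    rw [Finset.sum_eq_single j]
    · rw [map_smul, LinearMap.smul_apply]
      simp only [smul_eq_mul]; ring
    · intro i _ hij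
      rw [map_smul, LinearMap.smul_apply, hv hij, smul_zero]
    · simp
  -- diagonal entries are nonzero
  have hdiag : ∀ j, b' (v j) (v j) ≠ 0 := by
    intro j h0
    have hall : ∀ y ∈ W, b ((v j : A)) y = 0 := by
      intro y hy
      have h1 : b' (v j) ⟨y, hy⟩ = 0 := by
        conv_lhs => rw [← v.sum_repr ⟨y, hy⟩, map_sum]
        refine Finset.sum_eq_zero fun k _ => ?_
        rw [map_smul]
        rcases eq_or_ne j k with rfl | hkj
        · rw [h0, smul_zero]
        · rw [hv hkj, smul_zero]
      exact h1
    exact Basis.ne_zero v j (Subtype.ext (hnd _ (v j).2 hall))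
  set pos : Finset _ := Finset.univ.filter (fun j => 0 < b' (v j) (v j)) with hpos
  set neg : Finset _ := Finset.univ.filter (fun j => ¬ 0 < b' (v j) (v j)) with hneg
  have hnegval : ∀ j ∈ neg, b' (v j) (v j) < 0 := by
    intro j hj
    rw [hneg, Finset.mem_filter] at hj
    exact lt_of_le_of_ne (not_lt.mp hj.2) (hdiag j)
  have hcard : pos.card + neg.card = finrank ℝ ↥W := by
    rw [hpos, hneg, Finset.card_filter_add_card_filter_not]
    simp
  have hLI : ∀ s : Finset (Fin (finrank ℝ ↥W)),
      LinearIndependent ℝ ((↑) : ↥(↑(s.image v) : Set ↥W) → ↥W) := by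
    intro s
    refine (LinearIndependent.linearIndepOn_id v.linearIndependent).mono ?_
    rw [Finset.coe_image]
    exact Set.image_subset_range _ _
  have hfr : ∀ s : Finset (Fin (finrank ℝ ↥W)),
      finrank ℝ (Submodule.span ℝ (v '' ↑s)) = s.card := by
    intro s
    rw [← Finset.coe_image, finrank_span_finset_eq_card (hLI s),
      Finset.card_image_of_injective _ v.injective]
  have hmem : ∀ (s : Finset (Fin (finrank ℝ ↥W))) (x : ↥W),
      x ∈ Submodule.span ℝ (v '' ↑s) → ↑(v.repr x).support ⊆ ↑s := fun s x hx =>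
    v.mem_span_image.mp hx
  -- definiteness on the two spans
  have hposdef : ∀ x ∈ Submodule.span ℝ (v '' ↑pos), x ≠ 0 → 0 < b' x x := by
    intro x hx hx0
    have hsupp := hmem pos x hx
    rw [expand x]
    have hrepr : v.repr x ≠ 0 := fun h => hx0 (by simpa using congrArg v.repr.symm h)
    obtain ⟨j, hj⟩ := Finsupp.ne_iff.mp hrepr
    simp only [Finsupp.coe_zero, Pi.zero_apply] at hj
    have hjp := Finset.mem_filter.mp (hsupp (Finsupp.mem_support_iff.mpr hj))
    refine Finset.sum_pos' (fun k _ => ?_) ⟨j, Finset.mem_univ j, ?_⟩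
    · rcases eq_or_ne (v.repr x k) 0 with h | h
      · simp [h]
      · have hk := (Finset.mem_filter.mp (hsupp (Finsupp.mem_support_iff.mpr h))).2
        have h2 := mul_self_nonneg (v.repr x k)
        nlinarith
    · have h2 := mul_self_pos.mpr hj
      nlinarith [hjp.2]
  have hnegdef : ∀ x ∈ Submodule.span ℝ (v '' ↑neg), x ≠ 0 → b' x x < 0 := by
    intro x hx hx0
    have hsupp := hmem neg x hx
    rw [expand x]
    have hrepr : v.repr x ≠ 0 := fun h => hx0 (by simpa using congrArg v.repr.symm h)
    obtain ⟨j, hj⟩ := Finsupp.ne_iff.mp hrepr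
    simp only [Finsupp.coe_zero, Pi.zero_apply] at hj
    have hjn := hnegval j (hsupp (Finsupp.mem_support_iff.mpr hj))
    have hsum : ∑ k, (v.repr x k) * (v.repr x k) * b' (v k) (v k) <
        ∑ _k : Fin (finrank ℝ ↥W), (0 : ℝ) := by
      refine Finset.sum_lt_sum (fun k _ => ?_) ⟨j, Finset.mem_univ j, ?_⟩
      · rcases eq_or_ne (v.repr x k) 0 with h | h
        · simp [h]
        · have hk := hnegval k (hsupp (Finsupp.mem_support_iff.mpr h))
          have h2 := mul_self_nonneg (v.repr x k)
          nlinarith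
      · have h2 := mul_self_pos.mpr hj
        nlinarith
    simpa using hsum
  -- push down to `A`
  refine ⟨(Submodule.span ℝ (v '' ↑pos)).map W.subtype,
          (Submodule.span ℝ (v '' ↑neg)).map W.subtype,
          Submodule.map_subtype_le _ _, Submodule.map_subtype_le _ _, ?_, ?_, ?_⟩
  · rw [Submodule.finrank_map_subtype_eq, Submodule.finrank_map_subtype_eq, hfr, hfr, hcard]
  · rintro x ⟨y, hy, rfl⟩ hx0
    exact hposdef y hy (fun h => hx0 (by rw [h]; rfl))
  · rintro x ⟨y, hy, rfl⟩ hx0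
    exact hnegdef y hy (fun h => hx0 (by rw [h]; rfl))


section Aux2

variable {A : Type} [CommRing A] [Algebra ℝ A] [FiniteDimensional ℝ A]

lemma posIndexOn_add_eq {W : Submodule ℝ A} {b : A →ₗ[ℝ] A →ₗ[ℝ] ℝ}
    (hsymm : ∀ x y, b x y = b y x)
    (hnd : ∀ x ∈ W, (∀ y ∈ W, b x y = 0) → x = 0)
    {q : A → ℝ} (hq : ∀ x, q x = b x x) :
    posIndexOn A W q + posIndexOn A W (fun x => - q x) = finrank ℝ W := by
  obtain ⟨P, N, hP, hN, hsum, hpos, hneg⟩ := exists_posneg_split W b hsymm hnd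
  rw [posIndexOn_eq hP hN hsum (fun x hx h0 => hq x ▸ hpos x hx h0)
      (fun x hx h0 => hq x ▸ hneg x hx h0),
    posIndexOn_eq hN hP (by omega) (fun x hx h0 => by simp [hq x, hneg x hx h0])
      (fun x hx h0 => by simp only [hq x, neg_lt, neg_zero]; exact hpos x hx h0)]
  omega

/-- positive definiteness is detected by the vanishing of the negative index -/
lemma posdef_iff_negIndex_zero {W : Submodule ℝ A} {b : A →ₗ[ℝ] A →ₗ[ℝ] ℝ}
    (hsymm : ∀ x y, b x y = b y x)
    (hnd : ∀ x ∈ W, (∀ y ∈ W, b x y = 0) → x = 0)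
    {q : A → ℝ} (hq : ∀ x, q x = b x x) :
    (∀ x ∈ W, x ≠ 0 → 0 < q x) ↔ posIndexOn A W (fun x => - q x) = 0 := by
  constructor
  · intro hposdef
    refine le_antisymm (csSup_le (pidx_nonempty W _) ?_) (Nat.zero_le _)
    rintro n ⟨V, hVW, rfl, hVq⟩
    have : V = ⊥ := by
      rw [eq_bot_iff]
      intro x hx
      by_contra hx0
      have h1 := hVq x hx (fun h => hx0 ((Submodule.mem_bot ℝ).mpr h))
      have h2 := hposdef x (hVW hx) (fun h => hx0 ((Submodule.mem_bot ℝ).mpr h))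
      · simp only [Set.mem_setOf_eq] at h1; linarith
    simp [this]
  · intro h0 x hxW hx0
    obtain ⟨P, N, hP, hN, hsum, hpos, hneg⟩ := exists_posneg_split W b hsymm hnd
    have hNval : posIndexOn A W (fun x => - q x) = finrank ℝ N :=
      posIndexOn_eq hN hP (by omega) (fun x hx h => by simp [hq x, hneg x hx h])
        (fun x hx h => by simp only [hq x, neg_lt, neg_zero]; exact hpos x hx h)
    have hNbot : N = ⊥ := Submodule.finrank_eq_zero.mp (by omega)
    rw [hNbot] at hsum
    simp only [finrank_bot, add_zero] at hsum
    have hPW : P = W := Submodule.eq_of_le_of_finrank_eq hP hsum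
    rw [hq x]
    exact hq x ▸ hpos x (hPW ▸ hxW) hx0

/-- negative definiteness is detected by the vanishing of the positive index -/
lemma negdef_iff_posIndex_zero {W : Submodule ℝ A} {b : A →ₗ[ℝ] A →ₗ[ℝ] ℝ}
    (hsymm : ∀ x y, b x y = b y x)
    (hnd : ∀ x ∈ W, (∀ y ∈ W, b x y = 0) → x = 0)
    {q : A → ℝ} (hq : ∀ x, q x = b x x) :
    (∀ x ∈ W, x ≠ 0 → q x < 0) ↔ posIndexOn A W q = 0 := by
  have hsymm' : ∀ x y, (-b) x y = (-b) y x := by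
    intro x y; simp [hsymm x y]
  have hnd' : ∀ x ∈ W, (∀ y ∈ W, (-b) x y = 0) → x = 0 := by
    intro x hx h
    exact hnd x hx (fun y hy => by simpa [neg_eq_zero] using h y hy)
  have hq' : ∀ x, - q x = (-b) x x := by intro x; simp [hq x]
  have := posdef_iff_negIndex_zero hsymm' hnd' hq'
  constructor
  · intro h
    have h2 := this.mp (fun x hx h0 => by simpa using h x hx h0)
    simpa using h2
  · intro h x hx h0
    have h2 := this.mpr (by simpa using h) x hx h0
    simpa using h2

end Aux2


section Aux3

variable {A : Type} [CommRing A] [Algebra ℝ A] [FiniteDimensional ℝ A]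

/-- Additivity of the positive index over a `b`-orthogonal splitting `W = V₁ ⊔ V₂`. -/
lemma posIndexOn_sup {V₁ V₂ : Submodule ℝ A} {b : A →ₗ[ℝ] A →ₗ[ℝ] ℝ}
    (hsymm : ∀ x y, b x y = b y x)
    (hdisj : V₁ ⊓ V₂ = ⊥)
    (hcross : ∀ x ∈ V₁, ∀ y ∈ V₂, b x y = 0)
    (hnd : ∀ x ∈ V₁ ⊔ V₂, (∀ y ∈ V₁ ⊔ V₂, b x y = 0) → x = 0)
    {q : A → ℝ} (hq : ∀ x, q x = b x x) :
    posIndexOn A (V₁ ⊔ V₂) q = posIndexOn A V₁ q + posIndexOn A V₂ q ∧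
    posIndexOn A (V₁ ⊔ V₂) (fun x => - q x)
      = posIndexOn A V₁ (fun x => - q x) + posIndexOn A V₂ (fun x => - q x) := by
  have hnd₁ : ∀ x ∈ V₁, (∀ y ∈ V₁, b x y = 0) → x = 0 := by
    intro x hx h
    refine hnd x (le_sup_left (a := V₁) (b := V₂) hx) ?_
    intro y hy
    obtain ⟨y₁, hy₁, y₂, hy₂, rfl⟩ := Submodule.mem_sup.mp hy
    rw [map_add, h y₁ hy₁, hcross x hx y₂ hy₂, add_zero]
  have hnd₂ : ∀ x ∈ V₂, (∀ y ∈ V₂, b x y = 0) → x = 0 := by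
    intro x hx h
    refine hnd x (le_sup_right (a := V₁) (b := V₂) hx) ?_
    intro y hy
    obtain ⟨y₁, hy₁, y₂, hy₂, rfl⟩ := Submodule.mem_sup.mp hy
    rw [map_add, h y₂ hy₂, hsymm x y₁, hcross y₁ hy₁ x hx, zero_add]
  obtain ⟨P₁, N₁, hP₁, hN₁, hsum₁, hpos₁, hneg₁⟩ := exists_posneg_split V₁ b hsymm hnd₁
  obtain ⟨P₂, N₂, hP₂, hN₂, hsum₂, hpos₂, hneg₂⟩ := exists_posneg_split V₂ b hsymm hnd₂
  have hpos₁' : ∀ x ∈ P₁, x ≠ 0 → 0 < q x := fun x hx h => by rw [hq]; exact hpos₁ x hx h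
  have hpos₂' : ∀ x ∈ P₂, x ≠ 0 → 0 < q x := fun x hx h => by rw [hq]; exact hpos₂ x hx h
  have hneg₁' : ∀ x ∈ N₁, x ≠ 0 → q x < 0 := fun x hx h => by rw [hq]; exact hneg₁ x hx h
  have hneg₂' : ∀ x ∈ N₂, x ≠ 0 → q x < 0 := fun x hx h => by rw [hq]; exact hneg₂ x hx h
  have hrank : ∀ (S T : Submodule ℝ A), S ≤ V₁ → T ≤ V₂ →
      finrank ℝ ↥(S ⊔ T) = finrank ℝ S + finrank ℝ T := by
    intro S T hS hT
    have h1 : S ⊓ T = ⊥ := by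
      rw [eq_bot_iff]
      exact le_trans (inf_le_inf hS hT) (le_of_eq hdisj)
    have h2 := Submodule.finrank_sup_add_finrank_inf_eq S T
    rw [h1] at h2
    simpa using h2
  have hqadd : ∀ x₁ x₂, x₁ ∈ V₁ → x₂ ∈ V₂ → q (x₁ + x₂) = q x₁ + q x₂ := by
    intro x₁ x₂ h1 h2
    have hc := hcross x₁ h1 x₂ h2
    have hc' : b x₂ x₁ = 0 := by rw [hsymm]; exact hc
    simp only [hq, map_add, LinearMap.add_apply, hc, hc']
    ring
  have hq0 : q 0 = 0 := by rw [hq]; simp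
  have key : ∀ (S₁ S₂ : Submodule ℝ A), S₁ ≤ V₁ → S₂ ≤ V₂ →
      ∀ (r : A → ℝ), (∀ x₁ x₂, x₁ ∈ V₁ → x₂ ∈ V₂ → r (x₁ + x₂) = r x₁ + r x₂) →
      (∀ x ∈ S₁, x ≠ 0 → 0 < r x) → (∀ x ∈ S₂, x ≠ 0 → 0 < r x) → (r 0 = 0) →
      ∀ x ∈ S₁ ⊔ S₂, x ≠ 0 → 0 < r x := by
    intro S₁ S₂ hS₁ hS₂ r hadd hr₁ hr₂ hr0 x hx hx0
    obtain ⟨x₁, hx₁, x₂, hx₂, rfl⟩ := Submodule.mem_sup.mp hx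
    have hre : r (x₁ + x₂) = r x₁ + r x₂ := hadd x₁ x₂ (hS₁ hx₁) (hS₂ hx₂)
    rcases eq_or_ne x₁ 0 with rfl | h1
    · rcases eq_or_ne x₂ 0 with rfl | h2
      · exact absurd (zero_add 0) hx0
      · rw [hre, hr0, zero_add]
        exact hr₂ x₂ hx₂ h2
    · rcases eq_or_ne x₂ 0 with rfl | h2
      · rw [hre, hr0, add_zero]
        exact hr₁ x₁ hx₁ h1
      · rw [hre]
        exact add_pos (hr₁ x₁ hx₁ h1) (hr₂ x₂ hx₂ h2)
  have hposP : ∀ x ∈ P₁ ⊔ P₂, x ≠ 0 → 0 < q x :=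
    key P₁ P₂ hP₁ hP₂ q hqadd hpos₁' hpos₂' hq0
  have hnegN : ∀ x ∈ N₁ ⊔ N₂, x ≠ 0 → q x < 0 := by
    have := key N₁ N₂ hN₁ hN₂ (fun x => - q x)
      (fun x₁ x₂ h1 h2 => by simp only [hqadd x₁ x₂ h1 h2]; ring)
      (fun x hx h => by simpa using hneg₁' x hx h)
      (fun x hx h => by simpa using hneg₂' x hx h) (by simp [hq0])
    intro x hx h
    have h2 := this x hx h
    simpa using h2
  have hsumPN : finrank ℝ ↥(P₁ ⊔ P₂) + finrank ℝ ↥(N₁ ⊔ N₂) = finrank ℝ ↥(V₁ ⊔ V₂) := by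
    rw [hrank P₁ P₂ hP₁ hP₂, hrank N₁ N₂ hN₁ hN₂, hrank V₁ V₂ le_rfl le_rfl]
    omega
  have hPle : P₁ ⊔ P₂ ≤ V₁ ⊔ V₂ := sup_le_sup hP₁ hP₂
  have hNle : N₁ ⊔ N₂ ≤ V₁ ⊔ V₂ := sup_le_sup hN₁ hN₂
  constructor
  · rw [posIndexOn_eq hPle hNle hsumPN hposP hnegN,
      posIndexOn_eq hP₁ hN₁ hsum₁ hpos₁' hneg₁',
      posIndexOn_eq hP₂ hN₂ hsum₂ hpos₂' hneg₂',
      hrank P₁ P₂ hP₁ hP₂]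
  · rw [posIndexOn_eq hNle hPle (by omega)
        (fun x hx h => by simpa using hnegN x hx h)
        (fun x hx h => by simpa using hposP x hx h),
      posIndexOn_eq hN₁ hP₁ (by omega) (fun x hx h => by simpa using hneg₁' x hx h)
        (fun x hx h => by simpa using hpos₁' x hx h),
      posIndexOn_eq hN₂ hP₂ (by omega) (fun x hx h => by simpa using hneg₂' x hx h)
        (fun x hx h => by simpa using hpos₂' x hx h),
      hrank N₁ N₂ hN₁ hN₂]

/-- Transport of the positive index along an injective linear map matching the forms. -/
lemma posIndexOn_map {V : Submodule ℝ A} {φ : A →ₗ[ℝ] A} {q q' : A → ℝ}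
    (hker : ∀ x ∈ V, φ x = 0 → x = 0)
    (hqq' : ∀ x ∈ V, q' (φ x) = q x) :
    posIndexOn A (V.map φ) q' = posIndexOn A V q := by
  have hfr : ∀ S : Submodule ℝ A, S ≤ V → finrank ℝ ↥(S.map φ) = finrank ℝ S := by
    intro S hS
    have hinj : Function.Injective (φ.comp S.subtype) := by
      intro a b hab
      simp only [LinearMap.comp_apply] at hab
      have h0 : φ ((a : A) - (b : A)) = 0 := by rw [map_sub, sub_eq_zero]; exact hab
      have hmem : ((a : A) - (b : A)) ∈ V := hS (Submodule.sub_mem S a.2 b.2)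
      exact Subtype.ext (sub_eq_zero.mp (hker _ hmem h0))
    have hrange : LinearMap.range (φ.comp S.subtype) = S.map φ := by
      rw [LinearMap.range_comp, Submodule.range_subtype]
    rw [← hrange, LinearMap.finrank_range_of_inj hinj]
  apply le_antisymm
  · refine csSup_le (pidx_nonempty _ _) ?_
    rintro n ⟨U', hU'le, rfl, hU'q⟩
    have hmapU : (V ⊓ Submodule.comap φ U').map φ = U' := by
      apply le_antisymm
      · rintro _ ⟨x, hx, rfl⟩
        exact hx.2
      · intro x' hx'
        obtain ⟨x, hxV, rfl⟩ := hU'le hx'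
        exact ⟨x, ⟨hxV, hx'⟩, rfl⟩
    have hrk : finrank ℝ U' = finrank ℝ ↥(V ⊓ Submodule.comap φ U') := by
      conv_lhs => rw [← hmapU]
      rw [hfr _ inf_le_left]
    rw [hrk]
    refine le_posIndexOn inf_le_left ?_
    intro x hx hx0
    rw [← hqq' x hx.1]
    refine hU'q (φ x) hx.2 ?_
    intro h
    exact hx0 (hker x hx.1 h)
  · obtain ⟨U, hUle, hUrk, hUq⟩ := posIndexOn_spec V q
    rw [← hUrk, ← hfr U hUle]
    refine le_posIndexOn (Submodule.map_mono hUle) ?_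
    rintro _ ⟨x, hx, rfl⟩ hx0
    rw [hqq' x (hUle hx)]
    exact hUq x hx (fun h => hx0 (by rw [h, map_zero]))

end Aux3


section Aux4

variable {A : Type} [CommRing A] [Algebra ℝ A]
  [TopologicalSpace A] [IsTopologicalAddGroup A] [ContinuousSMul ℝ A] [T2Space A]
  [FiniteDimensional ℝ A]

lemma continuous_mul_fd : Continuous fun p : A × A => p.1 * p.2 := by
  classical
  set b := Module.finBasis ℝ A
  have key : (fun p : A × A => p.1 * p.2) =
      fun p => ∑ i, ∑ j, (b.equivFun p.1 i * b.equivFun p.2 j) • (b i * b j) := by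
    funext p
    conv_lhs => rw [← b.sum_equivFun p.1, ← b.sum_equivFun p.2]
    rw [Finset.sum_mul_sum]
    refine Finset.sum_congr rfl fun i _ => Finset.sum_congr rfl fun j _ => ?_
    rw [smul_mul_smul_comm]
  rw [key]
  have hcoord : ∀ i, Continuous fun x : A => b.equivFun x i := by
    intro i
    have h1 : Continuous (b.equivFun : A →ₗ[ℝ] (Fin (finrank ℝ A) → ℝ)) :=
      LinearMap.continuous_of_finiteDimensional _
    exact (continuous_apply i).comp h1
  refine continuous_finset_sum _ fun i _ => continuous_finset_sum _ fun j _ => ?_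
  exact (((hcoord i).comp continuous_fst).mul ((hcoord j).comp continuous_snd)).smul
    continuous_const

lemma continuous_pow_fd (k : ℕ) : Continuous fun x : A => x ^ k := by
  induction k with
  | zero => simpa using continuous_const
  | succ n ih =>
    have : (fun x : A => x ^ (n + 1)) = fun x => x ^ n * x := by
      funext x; rw [pow_succ]
    rw [this]
    exact continuous_mul_fd.comp (ih.prodMk continuous_id)

/-- If a jointly continuous, 2-homogeneous family of quadratic functions is positive
definite on a subspace `V` at `ℓ₀`, it stays positive definite nearby. -/
lemma eventually_posdef {F : A → A → ℝ}
    (hF : Continuous fun p : A × A => F p.1 p.2)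
    (hhom : ∀ ℓ (t : ℝ) x, F ℓ (t • x) = t ^ 2 * F ℓ x)
    (V : Submodule ℝ A) {ℓ₀ : A} (hpos : ∀ x ∈ V, x ≠ 0 → 0 < F ℓ₀ x) :
    ∀ᶠ ℓ in nhds ℓ₀, ∀ x ∈ V, x ≠ 0 → 0 < F ℓ x := by
  classical
  set n := finrank ℝ ↥V with hn
  rcases eq_or_ne n 0 with h0 | -
  · have hbot : V = ⊥ := Submodule.finrank_eq_zero.mp (by rw [← hn]; exact h0)
    filter_upwards with ℓ x hxV hx0
    exact absurd ((Submodule.mem_bot ℝ).mp (hbot ▸ hxV)) hx0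
  · set v := Module.finBasis ℝ ↥V
    set T : (Fin n → ℝ) → A := fun c => ∑ i, c i • ((v i : A)) with hT
    have hTmem : ∀ c, T c ∈ V := fun c => Submodule.sum_mem V fun i _ =>
      Submodule.smul_mem V _ (v i).2
    have hTcont : Continuous T :=
      continuous_finset_sum _ fun i _ => (continuous_apply i).smul continuous_const
    have hTcoe : ∀ c, T c = ((∑ i, c i • v i : ↥V) : A) := by
      intro c
      rw [hT]
      push_cast
      rfl
    have hTzero : ∀ c, T c = 0 → c = 0 := by
      intro c hc
      rw [hTcoe] at hc
      have h1 : (∑ i, c i • v i : ↥V) = 0 := by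
        exact_mod_cast Subtype.ext hc
      have h2 := Fintype.linearIndependent_iff.mp v.linearIndependent c h1
      funext i; exact h2 i
    have hsph : IsCompact (Metric.sphere (0 : Fin n → ℝ) 1) := isCompact_sphere _ _
    have hG : Continuous fun p : A × (Fin n → ℝ) => F p.1 (T p.2) :=
      hF.comp (continuous_fst.prodMk (hTcont.comp continuous_snd))
    have hkey : ∀ᶠ ℓ in nhds ℓ₀, ∀ c ∈ Metric.sphere (0 : Fin n → ℝ) 1, 0 < F ℓ (T c) := by
      refine hsph.eventually_forall_of_forall_eventually ?_
      intro c hc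
      have hc0 : c ≠ 0 := by
        intro h
        rw [h] at hc
        simp at hc
      have hTc0 : T c ≠ 0 := fun h => hc0 (hTzero c h)
      have hpos0 : 0 < F ℓ₀ (T c) := hpos (T c) (hTmem c) hTc0
      have : IsOpen {p : A × (Fin n → ℝ) | 0 < F p.1 (T p.2)} :=
        isOpen_lt continuous_const hG
      exact this.mem_nhds hpos0
    refine hkey.mono ?_
    intro ℓ hℓ x hxV hx0
    set x' : ↥V := ⟨x, hxV⟩
    set c₀ : Fin n → ℝ := v.equivFun x' with hc₀
    have hx'0 : x' ≠ 0 := fun h => hx0 (by rw [show x = (x' : A) from rfl, h]; rfl)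
    have hc₀0 : c₀ ≠ 0 := fun h => hx'0 (v.equivFun.map_eq_zero_iff.mp h)
    set t : ℝ := ‖c₀‖ with ht
    have ht0 : 0 < t := norm_pos_iff.mpr hc₀0
    have hmemsph : t⁻¹ • c₀ ∈ Metric.sphere (0 : Fin n → ℝ) 1 := by
      rw [mem_sphere_zero_iff_norm, norm_smul, norm_inv, norm_norm, ← ht]
      field_simp
    have hTx : T c₀ = x := by
      rw [hTcoe]
      have := v.sum_equivFun x'
      exact_mod_cast congrArg (Submodule.subtype V) this
    have hTsmul : T (t⁻¹ • c₀) = t⁻¹ • x := by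
      rw [hT, ← hTx, hT, Finset.smul_sum]
      refine Finset.sum_congr rfl fun i _ => ?_
      simp [smul_smul]
    have h1 := hℓ _ hmemsph
    rw [hTsmul, hhom ℓ t⁻¹ x] at h1
    have h2 : 0 < (t⁻¹) ^ 2 := by positivity
    nlinarith

/-- A function which is locally constant along a preconnected set is constant on it. -/
lemma const_on_of_locally_const {X β : Type*} [TopologicalSpace X] {U : Set X}
    (hconn : IsPreconnected U) {f : X → β}
    (hloc : ∀ x ∈ U, ∀ᶠ y in nhds x, y ∈ U → f y = f x) :
    ∀ x ∈ U, ∀ y ∈ U, f x = f y := by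
  classical
  intro x hx y hy
  by_contra hne
  -- choose open neighbourhoods witnessing local constancy
  have hO : ∀ a : X, a ∈ U → ∃ O : Set X, IsOpen O ∧ a ∈ O ∧
      ∀ z ∈ O, z ∈ U → f z = f a := by
    intro a ha
    obtain ⟨t, ht, hta⟩ := (hloc a ha).exists_mem
    exact ⟨interior t, isOpen_interior, mem_interior_iff_mem_nhds.mpr ht,
      fun z hz hzU => hta z (interior_subset hz) hzU⟩
  choose O hOopen hOmem hOconst using fun a : {a : X // a ∈ U} => hO a a.2
  set u : Set X := ⋃ (a : {a : X // a ∈ U}) (_ : f a = f x), O a with hu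
  set w : Set X := ⋃ (a : {a : X // a ∈ U}) (_ : f a ≠ f x), O a with hw
  have huo : IsOpen u := isOpen_iUnion fun a => isOpen_iUnion fun _ => hOopen a
  have hwo : IsOpen w := isOpen_iUnion fun a => isOpen_iUnion fun _ => hOopen a
  have hcover : U ⊆ u ∪ w := by
    intro z hz
    rcases eq_or_ne (f z) (f x) with h | h
    · exact Or.inl (Set.mem_iUnion.mpr ⟨⟨z, hz⟩, Set.mem_iUnion.mpr ⟨h, hOmem _⟩⟩)
    · exact Or.inr (Set.mem_iUnion.mpr ⟨⟨z, hz⟩, Set.mem_iUnion.mpr ⟨h, hOmem _⟩⟩)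
  have hxu : x ∈ U ∩ u :=
    ⟨hx, Set.mem_iUnion.mpr ⟨⟨x, hx⟩, Set.mem_iUnion.mpr ⟨rfl, hOmem _⟩⟩⟩
  have hyw : y ∈ U ∩ w :=
    ⟨hy, Set.mem_iUnion.mpr ⟨⟨y, hy⟩, Set.mem_iUnion.mpr ⟨fun h => hne h.symm, hOmem _⟩⟩⟩
  obtain ⟨z, hzU, hzu, hzw⟩ := hconn u w huo hwo hcover ⟨x, hxu⟩ ⟨y, hyw⟩
  obtain ⟨a, ha⟩ := Set.mem_iUnion.mp hzu
  obtain ⟨hfa, hza⟩ := Set.mem_iUnion.mp ha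
  obtain ⟨b, hb⟩ := Set.mem_iUnion.mp hzw
  obtain ⟨hfb, hzb⟩ := Set.mem_iUnion.mp hb
  have h1 : f z = f a := hOconst a z hza hzU
  have h2 : f z = f b := hOconst b z hzb hzU
  exact hfb (by rw [← h2, h1, hfa])

end Aux4


section DegForm

variable {A : Type} [CommRing A] [Algebra ℝ A]

/-- The bilinear form `x, y ↦ dg (x * y * c)`. -/
noncomputable def degForm (dg : A →ₗ[ℝ] ℝ) (c : A) : A →ₗ[ℝ] A →ₗ[ℝ] ℝ :=
  LinearMap.mk₂ ℝ (fun x y => dg (x * y * c))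
    (fun x x' y => by rw [add_mul, add_mul, map_add])
    (fun a x y => by rw [smul_mul_assoc, smul_mul_assoc, map_smul])
    (fun x y y' => by rw [mul_add, add_mul, map_add])
    (fun a x y => by rw [mul_smul_comm, smul_mul_assoc, map_smul])

@[simp] lemma degForm_apply (dg : A →ₗ[ℝ] ℝ) (c x y : A) :
    degForm dg c x y = dg (x * y * c) := rfl

lemma degForm_symm (dg : A →ₗ[ℝ] ℝ) (c x y : A) :
    degForm dg c x y = degForm dg c y x := by
  simp only [degForm_apply]
  rw [mul_comm x y]

end DegForm

/-- If every `ℓ` in a connected subset `U ⊆ H^1` satisfies Hard Lefschetz, then the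
signature of `Q_ℓ` on each `H^i` is constant on `U`; in particular if some `ℓ₀ ∈ U` satisfies
the Hodge–Riemann relations then so does every `ℓ ∈ U`.  (Here `A` carries its topology as a
finite-dimensional real topological vector space.) -/
theorem signature_constant_on_connected
    (A : Type) [CommRing A] [Algebra ℝ A]
    [TopologicalSpace A] [IsTopologicalAddGroup A] [ContinuousSMul ℝ A] [T2Space A]
    (g : ℕ → Submodule ℝ A) (d : ℕ)
    (dg : A →ₗ[ℝ] ℝ) (hPD : IsPDAlgebra A g d dg)
    (U : Set A) (hU : U ⊆ (g 1 : Set A)) (hconn : IsConnected U)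
    (hHL : ∀ ℓ ∈ U, HardLefschetz A g d ℓ) :
    (∀ ℓ₁ ∈ U, ∀ ℓ₂ ∈ U, ∀ i, 2 * i ≤ d →
      signatureOn A (g i) (fun x => dg (x * x * ℓ₁ ^ (d - 2 * i))) =
        signatureOn A (g i) (fun x => dg (x * x * ℓ₂ ^ (d - 2 * i)))) ∧
    (∀ ℓ₀ ∈ U, HodgeRiemann A g d dg ℓ₀ → ∀ ℓ ∈ U, HodgeRiemann A g d dg ℓ) := by
  obtain ⟨-, hmul, hone, htop, hfd, -, -, hpd⟩ := hPD
  haveI := hfd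
  have hmulmem : ∀ {i j : ℕ} {x y : A}, x ∈ g i → y ∈ g j → x * y ∈ g (i + j) :=
    fun hx hy => hmul _ _ (Submodule.mul_mem_mul hx hy)
  have hpow : ∀ {ℓ : A}, ℓ ∈ g 1 → ∀ n, ℓ ^ n ∈ g n := by
    intro ℓ hℓ n
    induction n with
    | zero => simpa using hone
    | succ m ih =>
      have h := hmulmem ih hℓ
      rw [← pow_succ] at h
      exact h
  -- nondegeneracy of the Lefschetz form on `g i`
  have hndeg : ∀ ℓ ∈ U, ∀ i, 2 * i ≤ d →
      ∀ x ∈ g i, (∀ y ∈ g i, degForm dg (ℓ ^ (d - 2 * i)) x y = 0) → x = 0 := by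
    intro ℓ hℓ i h2i x hx h
    refine hpd i (by omega) x hx ?_
    intro z hz
    obtain ⟨y, hy, hyz⟩ := (hHL ℓ hℓ i h2i).2 z hz
    have he : x * z = x * y * ℓ ^ (d - 2 * i) := by rw [← hyz]; ring
    rw [he]
    exact h y hy
  -- part 1 core: constancy of the positive and negative indices on `U`
  have hcore : ∀ i, 2 * i ≤ d → ∀ ℓ₁ ∈ U, ∀ ℓ₂ ∈ U,
      posIndexOn A (g i) (fun x => dg (x * x * ℓ₁ ^ (d - 2 * i))) =
        posIndexOn A (g i) (fun x => dg (x * x * ℓ₂ ^ (d - 2 * i))) ∧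
      posIndexOn A (g i) (fun x => - dg (x * x * ℓ₁ ^ (d - 2 * i))) =
        posIndexOn A (g i) (fun x => - dg (x * x * ℓ₂ ^ (d - 2 * i))) := by
    intro i h2i
    set k := d - 2 * i with hk
    set f : A → ℕ × ℕ := fun ℓ => (posIndexOn A (g i) (fun x => dg (x * x * ℓ ^ k)),
      posIndexOn A (g i) (fun x => - dg (x * x * ℓ ^ k))) with hf
    have hdg : Continuous dg := dg.continuous_of_finiteDimensional
    have hFcont : Continuous fun p : A × A => dg (p.2 * p.2 * p.1 ^ k) := by
      refine hdg.comp ?_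
      refine continuous_mul_fd.comp (Continuous.prodMk ?_ ?_)
      · exact continuous_mul_fd.comp (continuous_snd.prodMk continuous_snd)
      · exact (continuous_pow_fd k).comp continuous_fst
    have hhom : ∀ (ℓ : A) (t : ℝ) (x : A),
        dg ((t • x) * (t • x) * ℓ ^ k) = t ^ 2 * dg (x * x * ℓ ^ k) := by
      intro ℓ t x
      have he : (t • x) * (t • x) * ℓ ^ k = (t ^ 2) • (x * x * ℓ ^ k) := by
        rw [smul_mul_smul_comm, smul_mul_assoc, sq]
      rw [he, map_smul, smul_eq_mul]
    have hloc : ∀ ℓ₀ ∈ U, ∀ᶠ ℓ in nhds ℓ₀, ℓ ∈ U → f ℓ = f ℓ₀ := by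
      intro ℓ₀ hℓ₀
      obtain ⟨P, N, hP, hN, hsum, hpos, hneg⟩ :=
        exists_posneg_split (g i) (degForm dg (ℓ₀ ^ k)) (degForm_symm dg _)
          (hndeg ℓ₀ hℓ₀ i h2i)
      have ev1 : ∀ᶠ ℓ in nhds ℓ₀, ∀ x ∈ P, x ≠ 0 → 0 < dg (x * x * ℓ ^ k) := by
        refine eventually_posdef (F := fun ℓ x => dg (x * x * ℓ ^ k)) hFcont hhom P ?_
        intro x hx h0
        exact hpos x hx h0
      have ev2 : ∀ᶠ ℓ in nhds ℓ₀, ∀ x ∈ N, x ≠ 0 → 0 < - dg (x * x * ℓ ^ k) := by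
        refine eventually_posdef (F := fun ℓ x => - dg (x * x * ℓ ^ k)) hFcont.neg
          (fun ℓ t x => by rw [hhom ℓ t x]; ring) N ?_
        intro x hx h0
        simpa using hneg x hx h0
      filter_upwards [ev1, ev2] with ℓ h1 h2 hℓU
      have hsumℓ : posIndexOn A (g i) (fun x => dg (x * x * ℓ ^ k)) +
          posIndexOn A (g i) (fun x => - dg (x * x * ℓ ^ k)) = finrank ℝ (g i) :=
        posIndexOn_add_eq (degForm_symm dg _) (hndeg ℓ hℓU i h2i)
          (fun x => (degForm_apply dg _ x x).symm)
      have hge1 : finrank ℝ P ≤ posIndexOn A (g i) (fun x => dg (x * x * ℓ ^ k)) :=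
        le_posIndexOn hP h1
      have hge2 : finrank ℝ N ≤ posIndexOn A (g i) (fun x => - dg (x * x * ℓ ^ k)) :=
        le_posIndexOn hN h2
      have hv1 : posIndexOn A (g i) (fun x => dg (x * x * ℓ₀ ^ k)) = finrank ℝ P :=
        posIndexOn_eq hP hN hsum (fun x hx h => hpos x hx h) (fun x hx h => hneg x hx h)
      have hv2 : posIndexOn A (g i) (fun x => - dg (x * x * ℓ₀ ^ k)) = finrank ℝ N :=
        posIndexOn_eq hN hP (by omega)
          (fun x hx h => by simpa using hneg x hx h)
          (fun x hx h => by simpa using hpos x hx h)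
      rw [hf]
      simp only [Prod.mk.injEq]
      constructor
      · rw [hv1]; omega
      · rw [hv2]; omega
    intro ℓ₁ h1 ℓ₂ h2
    have hconst := const_on_of_locally_const hconn.2 hloc ℓ₁ h1 ℓ₂ h2
    exact ⟨congrArg Prod.fst hconst, congrArg Prod.snd hconst⟩
  constructor
  · intro ℓ₁ h1 ℓ₂ h2 i h2i
    have h := hcore i h2i ℓ₁ h1 ℓ₂ h2
    unfold signatureOn
    rw [h.1, h.2]
  -- part 2
  intro ℓ₀ hℓ₀ hHR ℓ hℓ i h2i
  -- primitive subspace facts, for any ℓ' ∈ U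
  have hprim_le : ∀ (ℓ' : A), Primitive A g d i ℓ' ≤ g i := fun ℓ' => inf_le_left
  rcases Nat.eq_zero_or_pos i with rfl | hipos
  · -- `i = 0` : the primitive part is all of `g 0`
    have hprim_eq : ∀ ℓ' ∈ U, Primitive A g d 0 ℓ' = g 0 := by
      intro ℓ' hℓ'
      refine le_antisymm (hprim_le ℓ') ?_
      intro x hx
      refine Submodule.mem_inf.mpr ⟨hx, LinearMap.mem_ker.mpr ?_⟩
      rw [LinearMap.mulLeft_apply]
      have hm : ℓ' ^ (d - 2 * 0 + 1) * x ∈ g (d - 2 * 0 + 1 + 0) :=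
        hmulmem (hpow (hU hℓ') _) hx
      rw [htop _ (by omega)] at hm
      exact (Submodule.mem_bot ℝ).mp hm
    intro x hxP hx0
    have h0 : (-1 : ℝ) ^ 0 = 1 := by norm_num
    rw [h0, one_mul]
    have hiff := fun (ℓ' : A) (hℓ' : ℓ' ∈ U) =>
      posdef_iff_negIndex_zero (A := A) (W := g 0) (b := degForm dg (ℓ' ^ (d - 2 * 0)))
        (degForm_symm dg _) (hndeg ℓ' hℓ' 0 h2i)
        (q := fun x => dg (x * x * ℓ' ^ (d - 2 * 0)))
        (fun x => (degForm_apply dg _ x x).symm)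
    have hHR0 := hHR 0 h2i
    have hpd0 : ∀ y ∈ g 0, y ≠ 0 → 0 < dg (y * y * ℓ₀ ^ (d - 2 * 0)) := by
      intro y hy hy0
      have := hHR0 y (by rw [hprim_eq ℓ₀ hℓ₀]; exact hy) hy0
      simpa using this
    have hz := (hiff ℓ₀ hℓ₀).mp hpd0
    rw [← (hcore 0 h2i ℓ hℓ ℓ₀ hℓ₀).2] at hz
    exact (hiff ℓ hℓ).mpr hz x ((hprim_eq ℓ hℓ) ▸ hxP) hx0
  · -- `i ≥ 1`
    obtain ⟨j, rfl⟩ : ∃ j, i = j + 1 := ⟨i - 1, by omega⟩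
    set i := j + 1
    have h2j : 2 * j ≤ d := by omega
    -- decomposition facts for each ℓ' ∈ U
    have hdec : ∀ ℓ' ∈ U,
        posIndexOn A (g i) (fun x => dg (x * x * ℓ' ^ (d - 2 * i))) =
          posIndexOn A (Primitive A g d i ℓ') (fun x => dg (x * x * ℓ' ^ (d - 2 * i))) +
          posIndexOn A (g j) (fun x => dg (x * x * ℓ' ^ (d - 2 * j))) ∧
        posIndexOn A (g i) (fun x => - dg (x * x * ℓ' ^ (d - 2 * i))) =
          posIndexOn A (Primitive A g d i ℓ') (fun x => - dg (x * x * ℓ' ^ (d - 2 * i))) +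
          posIndexOn A (g j) (fun x => - dg (x * x * ℓ' ^ (d - 2 * j))) ∧
        (∀ x ∈ Primitive A g d i ℓ',
          (∀ y ∈ Primitive A g d i ℓ', degForm dg (ℓ' ^ (d - 2 * i)) x y = 0) → x = 0) := by
      intro ℓ' hℓ'
      have hℓ'1 : ℓ' ∈ g 1 := hU hℓ'
      set V₂ : Submodule ℝ A := (g j).map (LinearMap.mulLeft ℝ ℓ') with hV₂
      have hker : ∀ x ∈ g j, ℓ' * x = 0 → x = 0 := by
        intro x hx h0
        refine (hHL ℓ' hℓ' j h2j).1 x hx ?_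
        have he : ℓ' ^ (d - 2 * j) * x = ℓ' ^ (d - 2 * i) * ℓ' ^ 1 * (ℓ' * x) := by
          rw [← pow_add, ← mul_assoc, ← pow_succ]
          congr 2
          omega
        rw [he, h0, mul_zero]
      have hmemPrim : ∀ x, x ∈ Primitive A g d i ℓ' ↔
          x ∈ g i ∧ ℓ' ^ (d - 2 * i + 1) * x = 0 := by
        intro x
        rw [Primitive, Submodule.mem_inf, LinearMap.mem_ker, LinearMap.mulLeft_apply]
      have hdisj : Primitive A g d i ℓ' ⊓ V₂ = ⊥ := by
        rw [eq_bot_iff]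
        rintro x ⟨hxP, hxV⟩
        obtain ⟨z, hz, rfl⟩ := hxV
        rw [LinearMap.mulLeft_apply] at *
        have h1 := (hmemPrim _).mp hxP
        have h2 : ℓ' ^ (d - 2 * j) * z = 0 := by
          have he : ℓ' ^ (d - 2 * j) * z = ℓ' ^ (d - 2 * i + 1) * (ℓ' * z) := by
            rw [← mul_assoc, ← pow_succ]
            congr 2
            omega
          rw [he, h1.2]
        have := (hHL ℓ' hℓ' j h2j).1 z hz h2
        rw [this, mul_zero]
        exact Submodule.zero_mem ⊥
      have hsup : Primitive A g d i ℓ' ⊔ V₂ = g i := by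
        apply le_antisymm
        · refine sup_le (hprim_le ℓ') ?_
          rintro x ⟨z, hz, rfl⟩
          rw [LinearMap.mulLeft_apply]
          have := hmulmem hℓ'1 hz
          rwa [show (1 + j : ℕ) = i by omega] at this
        · intro x hx
          have hy : ℓ' ^ (d - 2 * i + 1) * x ∈ g (d - j) := by
            have := hmulmem (hpow hℓ'1 (d - 2 * i + 1)) hx
            rwa [show (d - 2 * i + 1 + i : ℕ) = d - j by omega] at this
          obtain ⟨z, hz, hze⟩ := (hHL ℓ' hℓ' j h2j).2 _ hy
          refine Submodule.mem_sup.mpr ⟨x - ℓ' * z, ?_, ℓ' * z,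
            ⟨z, hz, by rw [LinearMap.mulLeft_apply]⟩, by ring⟩
          refine (hmemPrim _).mpr ⟨?_, ?_⟩
          · refine Submodule.sub_mem _ hx ?_
            have := hmulmem hℓ'1 hz
            rwa [show (1 + j : ℕ) = i by omega] at this
          · have he : ℓ' ^ (d - 2 * i + 1) * (ℓ' * z) = ℓ' ^ (d - 2 * j) * z := by
              rw [← mul_assoc, ← pow_succ]
              congr 2
              omega
            rw [mul_sub, he, hze, sub_self]
      have hcross : ∀ x ∈ Primitive A g d i ℓ', ∀ y ∈ V₂,
          degForm dg (ℓ' ^ (d - 2 * i)) x y = 0 := by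
        rintro x hxP y ⟨z, hz, rfl⟩
        rw [LinearMap.mulLeft_apply, degForm_apply]
        have h1 := ((hmemPrim x).mp hxP).2
        have he : x * (ℓ' * z) * ℓ' ^ (d - 2 * i) = (ℓ' ^ (d - 2 * i + 1) * x) * z := by
          rw [pow_succ]
          ring
        rw [he, h1, zero_mul, map_zero]
      have hndsup : ∀ x ∈ Primitive A g d i ℓ' ⊔ V₂,
          (∀ y ∈ Primitive A g d i ℓ' ⊔ V₂, degForm dg (ℓ' ^ (d - 2 * i)) x y = 0) →
          x = 0 := by
        rw [hsup]
        exact hndeg ℓ' hℓ' i h2i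
      obtain ⟨hs1, hs2⟩ := posIndexOn_sup (A := A) (degForm_symm dg (ℓ' ^ (d - 2 * i)))
        hdisj hcross hndsup (q := fun x => dg (x * x * ℓ' ^ (d - 2 * i)))
        (fun x => (degForm_apply dg _ x x).symm)
      rw [hsup] at hs1 hs2
      have hqtrans : ∀ x ∈ g j,
          (fun x => dg (x * x * ℓ' ^ (d - 2 * i))) (LinearMap.mulLeft ℝ ℓ' x) =
            dg (x * x * ℓ' ^ (d - 2 * j)) := by
        intro x hx
        rw [LinearMap.mulLeft_apply]
        congr 1
        have he : (d - 2 * j : ℕ) = d - 2 * i + 2 := by omega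
        rw [he, pow_add]
        ring
      have hmap1 : posIndexOn A V₂ (fun x => dg (x * x * ℓ' ^ (d - 2 * i))) =
          posIndexOn A (g j) (fun x => dg (x * x * ℓ' ^ (d - 2 * j))) :=
        posIndexOn_map hker hqtrans
      have hmap2 : posIndexOn A V₂ (fun x => - dg (x * x * ℓ' ^ (d - 2 * i))) =
          posIndexOn A (g j) (fun x => - dg (x * x * ℓ' ^ (d - 2 * j))) :=
        posIndexOn_map hker (fun x hx => congrArg Neg.neg (hqtrans x hx))
      refine ⟨by rw [hs1, hmap1], by rw [hs2, hmap2], ?_⟩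
      -- nondegeneracy on the primitive part
      intro x hxP h
      refine hndsup x (le_sup_left (b := V₂) hxP) ?_
      intro y hy
      obtain ⟨y₁, hy₁, y₂, hy₂, rfl⟩ := Submodule.mem_sup.mp hy
      rw [map_add, h y₁ hy₁, hcross x hxP y₂ hy₂, add_zero]
    obtain ⟨hd1ℓ, hd2ℓ, hndPℓ⟩ := hdec ℓ hℓ
    obtain ⟨hd1ℓ₀, hd2ℓ₀, hndPℓ₀⟩ := hdec ℓ₀ hℓ₀
    have hc_i := hcore i h2i ℓ hℓ ℓ₀ hℓ₀
    have hc_j := hcore j h2j ℓ hℓ ℓ₀ hℓ₀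
    have hHRi := hHR i h2i
    rcases Nat.even_or_odd i with he | ho
    · -- even case
      have hsign : ((-1 : ℝ) ^ i) = 1 := he.neg_one_pow
      have hiffP : ∀ ℓ' ∈ U,
          ((∀ x ∈ Primitive A g d i ℓ', x ≠ 0 → 0 < dg (x * x * ℓ' ^ (d - 2 * i))) ↔
            posIndexOn A (Primitive A g d i ℓ')
              (fun x => - dg (x * x * ℓ' ^ (d - 2 * i))) = 0) := by
        intro ℓ' hℓ'
        exact posdef_iff_negIndex_zero (degForm_symm dg _) ((hdec ℓ' hℓ').2.2)
          (fun x => (degForm_apply dg _ x x).symm)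
      have hz₀ : posIndexOn A (Primitive A g d i ℓ₀)
          (fun x => - dg (x * x * ℓ₀ ^ (d - 2 * i))) = 0 := by
        refine (hiffP ℓ₀ hℓ₀).mp ?_
        intro x hx hx0
        have := hHRi x hx hx0
        rwa [hsign, one_mul] at this
      have hzℓ : posIndexOn A (Primitive A g d i ℓ)
          (fun x => - dg (x * x * ℓ ^ (d - 2 * i))) = 0 := by
        have e1 := hd2ℓ
        rw [hc_i.2, hc_j.2] at e1
        omega
      intro x hx hx0
      rw [hsign, one_mul]
      exact (hiffP ℓ hℓ).mpr hzℓ x hx hx0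
    · -- odd case
      have hsign : ((-1 : ℝ) ^ i) = -1 := ho.neg_one_pow
      have hiffP : ∀ ℓ' ∈ U,
          ((∀ x ∈ Primitive A g d i ℓ', x ≠ 0 → dg (x * x * ℓ' ^ (d - 2 * i)) < 0) ↔
            posIndexOn A (Primitive A g d i ℓ')
              (fun x => dg (x * x * ℓ' ^ (d - 2 * i))) = 0) := by
        intro ℓ' hℓ'
        exact negdef_iff_posIndex_zero (degForm_symm dg _) ((hdec ℓ' hℓ').2.2)
          (fun x => (degForm_apply dg _ x x).symm)
      have hz₀ : posIndexOn A (Primitive A g d i ℓ₀)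
          (fun x => dg (x * x * ℓ₀ ^ (d - 2 * i))) = 0 := by
        refine (hiffP ℓ₀ hℓ₀).mp ?_
        intro x hx hx0
        have := hHRi x hx hx0
        rw [hsign, neg_one_mul] at this
        linarith
      have hzℓ : posIndexOn A (Primitive A g d i ℓ)
          (fun x => dg (x * x * ℓ ^ (d - 2 * i))) = 0 := by
        have e1 := hd1ℓ
        rw [hc_i.1, hc_j.1] at e1
        omega
      intro x hx hx0
      rw [hsign, neg_one_mul]
      have := (hiffP ℓ hℓ).mpr hzℓ x hx hx0
      linarith
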